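/- Let μ be a Borel probability measure on [0,1]^d such that μ(Q_w) > 0 for every word w and μ assigns zero measure to the topological boundary of every dyadic cube Q_w. Then for all 0 < δ' < δ, limsup_{m→∞} (log₂ H_{m,δ}(μ))/m ≤ H(μ,δ'). In particular, sup_{δ>0} limsup_{m→∞} (log₂ H_{m,δ}(μ))/m ≤ dim_qA μ, so if sup_{δ>0} limsup_{m→∞} (log₂ H_{m,δ}(μ))/m = ∞ then dim_qA μ = ∞. -/

import Mathlib

open MeasureTheory Filter Set
open scoped ENNReal NNReal

/-- The alphabet `Λ = {0,1}^d`, identified with `{0,…,2^d−1}`. -/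
abbrev Lam (d : ℕ) := Fin d → Bool

/-- Finite words over the alphabet `Λ` (including the empty word). -/
abbrev Wd (d : ℕ) := List (Lam d)

/-- A word `w = w_1⋯w_m` is central if for each coordinate `i` the digit string
`(w_1(i),…,w_m(i))` equals `(0,1,1,…,1)` or `(1,0,0,…,0)`. -/
def IsCentral (d : ℕ) (w : Wd d) : Prop :=
  ∀ i : Fin d, ∃ b : Bool, w.map (fun a => a i) = b :: List.replicate (w.length - 1) (!b)

/-- The lower corner of the dyadic cube of the word `w`: `a_i = Σ_j w_j(i) 2^{−j}`. -/
noncomputable def dyadicA (d : ℕ) (w : Wd d) (i : Fin d) : ℝ :=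
  ∑ j : Fin w.length, (if w.get j i then ((2 : ℝ) ^ (j.val + 1))⁻¹ else 0)

/-- The dyadic cube `Q_w ⊆ [0,1]^d` of generation `|w|`: product of the intervals
`[a_i, a_i + 2^{−k})`, taken as `[a_i, 1]` when `a_i + 2^{−k} = 1`. -/
noncomputable def Qcube (d : ℕ) (w : Wd d) : Set (Fin d → ℝ) :=
  {y | ∀ i, dyadicA d w i ≤ y i ∧
       (y i < dyadicA d w i + ((2 : ℝ) ^ w.length)⁻¹ ∨
        (dyadicA d w i + ((2 : ℝ) ^ w.length)⁻¹ = 1 ∧ y i ≤ 1))}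

/-- The support of a measure on `ℝ^d`: points all of whose closed balls have positive measure. -/
def msupport (d : ℕ) (μ : Measure (Fin d → ℝ)) : Set (Fin d → ℝ) :=
  {x | ∀ r : ℝ, 0 < r → 0 < μ (Metric.closedBall x r)}

/-- `H(μ,δ)`: the infimum of exponents `s` admissible for the upper (quasi-)Assouad condition. -/
noncomputable def Hfun (d : ℕ) (μ : Measure (Fin d → ℝ)) (δ : ℝ) : ℝ≥0∞ :=
  ⨅ (s : ℝ) (_ : ∃ C : ℝ, 0 < C ∧ ∀ x ∈ msupport d μ, ∀ r R : ℝ,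
      0 < r → r < R ^ (1 + δ) → R ^ (1 + δ) < R → R < 1 →
      μ (Metric.closedBall x R) / μ (Metric.closedBall x r) ≤ ENNReal.ofReal (C * (R / r) ^ s)),
    ENNReal.ofReal s

/-- The upper quasi-Assouad dimension `dim_qA μ = lim_{δ→0+} H(μ,δ) = sup_{δ>0} H(μ,δ)`. -/
noncomputable def dimqA (d : ℕ) (μ : Measure (Fin d → ℝ)) : ℝ≥0∞ :=
  ⨆ (δ : ℝ) (_ : 0 < δ), Hfun d μ δ

/-- `H_{m,δ}(μ)`: max over words `ω` of length `⌊m/δ⌋` of the min over central words `w`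
of length `m` of `μ(Q_ω)/μ(Q_{ωw})`. -/
noncomputable def HmdMeas (d : ℕ) (μ : Measure (Fin d → ℝ)) (δ : ℝ) (m : ℕ) : ℝ≥0∞ :=
  ⨆ (ω : Wd d) (_ : ω.length = ⌊(m : ℝ) / δ⌋₊),
    ⨅ (w : Wd d) (_ : w.length = m ∧ IsCentral d w), μ (Qcube d ω) / μ (Qcube d (ω ++ w))

/-- Base-2 logarithm on `ℝ≥0∞` (with `log₂ ∞ = ∞`). -/
noncomputable def log2 (y : ℝ≥0∞) : ℝ≥0∞ :=
  if y = ⊤ then ⊤ else ENNReal.ofReal (Real.logb 2 y.toReal)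

/-!
The central word `w = 0 1 1 ⋯ 1` of length `m` singles out, inside a dyadic cube `Q_ω` of
side `2^{-k}`, the subcube `Q_{ωw}` of side `2^{-(k+m)}` whose upper corner is the centre of
`Q_ω`. The centre `x` of `Q_{ωw}` is a dyadic corner point, hence lies in the support of `μ`, and
`B(x, 2^{-(k+m+2)}) ⊆ Q_{ωw}` while `Q_ω ⊆ B(x, 2^{-k})`. For `k = ⌊m/δ⌋` and `δ' < δ` these
radii are admissible in the definition of `H(μ,δ')`, so any admissible exponent `s` gives
`H_{m,δ}(μ) ≤ C 2^{(m+2)s}`, whence `limsup_m log₂ H_{m,δ}(μ) / m ≤ s`.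
-/

open scoped Topology

@[simp]
lemma dyadicA_nil (d : ℕ) (i : Fin d) : dyadicA d [] i = 0 := by
  simp [dyadicA]

lemma dyadicA_cons (d : ℕ) (a : Lam d) (l : Wd d) (i : Fin d) :
    dyadicA d (a :: l) i = (if a i then (2 : ℝ)⁻¹ else 0) + 2⁻¹ * dyadicA d l i := by
  rw [dyadicA, dyadicA, Finset.mul_sum]
  change ∑ j : Fin (l.length + 1), _ = _
  rw [Fin.sum_univ_succ]
  congr 1
  · norm_num
    rfl
  · refine Finset.sum_congr rfl fun j _ => ?_
    rw [show (a :: l).get j.succ = l.get j from rfl, Fin.val_succ, pow_succ, mul_inv]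
    split_ifs <;> ring

lemma dyadicA_append (d : ℕ) (u v : Wd d) (i : Fin d) :
    dyadicA d (u ++ v) i = dyadicA d u i + ((2 : ℝ) ^ u.length)⁻¹ * dyadicA d v i := by
  induction u with
  | nil => simp
  | cons a l ih =>
    rw [List.cons_append, dyadicA_cons, dyadicA_cons, ih, List.length_cons, pow_succ, mul_inv]
    ring

lemma dyadicA_replicate_false (d n : ℕ) (i : Fin d) :
    dyadicA d (List.replicate n fun _ => false) i = 0 := by
  induction n with
  | zero => simp
  | succ n ih => simp [List.replicate_succ, dyadicA_cons, ih]

lemma dyadicA_replicate_true (d n : ℕ) (i : Fin d) :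
    dyadicA d (List.replicate n fun _ => true) i = 1 - ((2 : ℝ) ^ n)⁻¹ := by
  induction n with
  | zero => simp
  | succ n ih =>
    rw [List.replicate_succ, dyadicA_cons, ih, pow_succ, mul_inv]
    simp only [if_true]
    ring

lemma Qcube_subset_closedBall {d : ℕ} {u : Wd d} {x : Fin d → ℝ}
    (hx : ∀ i, dyadicA d u i ≤ x i ∧ x i ≤ dyadicA d u i + ((2 : ℝ) ^ u.length)⁻¹) :
    Qcube d u ⊆ Metric.closedBall x ((2 : ℝ) ^ u.length)⁻¹ := by
  intro y hy
  rw [Metric.mem_closedBall, dist_pi_le_iff (by positivity)]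
  intro i
  have hyi : y i ≤ dyadicA d u i + ((2 : ℝ) ^ u.length)⁻¹ := by
    rcases (hy i).2 with h | h
    · exact h.le
    · exact h.1 ▸ h.2
  rw [Real.dist_eq, abs_le]
  constructor <;> linarith [(hy i).1, hx i]

lemma closedBall_subset_Qcube {d : ℕ} {u : Wd d} {x : Fin d → ℝ} {r : ℝ}
    (hx : ∀ i, dyadicA d u i ≤ x i - r ∧ x i + r < dyadicA d u i + ((2 : ℝ) ^ u.length)⁻¹) :
    Metric.closedBall x r ⊆ Qcube d u := by
  intro y hy i
  have hyi : |y i - x i| ≤ r := (dist_le_pi_dist y x i).trans (Metric.mem_closedBall.mp hy)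
  rw [abs_le] at hyi
  exact ⟨by linarith [hx i], Or.inl (by linarith [hx i])⟩

lemma dyadicA_mem_msupport {d : ℕ} {μ : Measure (Fin d → ℝ)}
    (hpos : ∀ w : Wd d, 0 < μ (Qcube d w)) (u : Wd d) : dyadicA d u ∈ msupport d μ := by
  intro ρ hρ
  obtain ⟨n, hn⟩ : ∃ n : ℕ, (2⁻¹ : ℝ) ^ n < ρ := exists_pow_lt_of_lt_one hρ (by norm_num)
  -- appending zeros keeps the corner and shrinks the cube into the ball
  set v := u ++ List.replicate n fun _ => false
  have hcorner : dyadicA d v = dyadicA d u := by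
    funext i
    simp [v, dyadicA_append, dyadicA_replicate_false]
  have hside : ((2 : ℝ) ^ v.length)⁻¹ ≤ ρ := by
    rw [inv_pow] at hn
    refine le_trans (inv_anti₀ (by positivity) (pow_le_pow_right₀ one_le_two ?_)) hn.le
    simp [v]
  have hball : Qcube d v ⊆ Metric.closedBall (dyadicA d u) ρ := by
    refine (Qcube_subset_closedBall fun i => ?_).trans (Metric.closedBall_subset_closedBall hside)
    rw [← hcorner]
    exact ⟨le_rfl, by simp only [le_add_iff_nonneg_right]; positivity⟩
  exact (hpos v).trans_le (measure_mono hball)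

/-- The central word `0 1 1 ⋯ 1`; its length is `m` only for `m ≥ 1`. -/
def centralWord (d m : ℕ) : Wd d := (fun _ => false) :: List.replicate (m - 1) fun _ => true

lemma centralWord_length (d : ℕ) {m : ℕ} (hm : 1 ≤ m) : (centralWord d m).length = m := by
  simp [centralWord, Nat.sub_add_cancel hm]

lemma isCentral_centralWord (d m : ℕ) : IsCentral d (centralWord d m) :=
  fun _ => ⟨false, by simp [centralWord, List.map_replicate]⟩

lemma dyadicA_centralWord (d : ℕ) {m : ℕ} (hm : 1 ≤ m) (i : Fin d) :
    dyadicA d (centralWord d m) i = 2⁻¹ - ((2 : ℝ) ^ m)⁻¹ := by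
  obtain ⟨n, rfl⟩ := Nat.exists_eq_add_of_le' hm
  simp only [centralWord, dyadicA_cons, dyadicA_replicate_true, Nat.add_sub_cancel, pow_succ,
    mul_inv, Bool.false_eq_true, if_false]
  ring

/-- The condition defining the admissible exponents `s` in `Hfun`. -/
def IsAssouadBound (d : ℕ) (μ : Measure (Fin d → ℝ)) (δ s C : ℝ) : Prop :=
  ∀ x ∈ msupport d μ, ∀ r R : ℝ, 0 < r → r < R ^ (1 + δ) → R ^ (1 + δ) < R → R < 1 →
    μ (Metric.closedBall x R) / μ (Metric.closedBall x r) ≤ ENNReal.ofReal (C * (R / r) ^ s)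

lemma inv_two_pow_admissible_scales {δ : ℝ} {k n : ℕ} (hδ : 0 < δ) (hk : 1 ≤ k)
    (hkn : k * δ < n) :
    ((2 : ℝ) ^ (k + n))⁻¹ < ((2 : ℝ) ^ k)⁻¹ ^ (1 + δ) ∧
      ((2 : ℝ) ^ k)⁻¹ ^ (1 + δ) < ((2 : ℝ) ^ k)⁻¹ ∧ ((2 : ℝ) ^ k)⁻¹ < 1 := by
  have hpow : ∀ j : ℕ, ((2 : ℝ) ^ j)⁻¹ = 2 ^ (-(j : ℝ)) := fun j => by
    rw [Real.rpow_neg zero_le_two, Real.rpow_natCast]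
  have hk' : (1 : ℝ) ≤ k := by exact_mod_cast hk
  rw [hpow, hpow, ← Real.rpow_mul zero_le_two]
  simp only [Real.rpow_lt_rpow_left_iff one_lt_two, Real.rpow_lt_one_iff_of_pos two_pos]
  push_cast
  refine ⟨by nlinarith, by nlinarith, Or.inl ⟨one_lt_two, by linarith⟩⟩

lemma measure_Qcube_div_append_centralWord_le {d : ℕ} {μ : Measure (Fin d → ℝ)}
    (hpos : ∀ w : Wd d, 0 < μ (Qcube d w)) {δ s C : ℝ} (hδ : 0 < δ)
    (hbound : IsAssouadBound d μ δ s C) {ω : Wd d} {m : ℕ} (hk : 1 ≤ ω.length) (hm : 1 ≤ m)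
    (hkm : ω.length * δ < m + 2) :
    μ (Qcube d ω) / μ (Qcube d (ω ++ centralWord d m)) ≤
      ENNReal.ofReal (C * ((2 : ℝ) ^ (m + 2)) ^ s) := by
  set k := ω.length
  set h : ℝ := ((2 : ℝ) ^ k)⁻¹
  set e : ℝ := ((2 : ℝ) ^ m)⁻¹
  have he : 0 < e := by positivity
  have he1 : e ≤ 2⁻¹ := by
    simpa [e] using inv_anti₀ two_pos (le_self_pow₀ one_le_two (by omega : m ≠ 0))
  -- `x` is the centre of `Q_{ωw}`, and also the lower corner of the word `ωw1`
  set x := dyadicA d (ω ++ centralWord d m ++ [fun _ => true])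
  have hlen : (ω ++ centralWord d m).length = k + m := by
    simp [k, centralWord_length d hm]
  have hside : ((2 : ℝ) ^ (k + m))⁻¹ = h * e := by rw [pow_add, mul_inv]
  have hcorner : ∀ i, dyadicA d (ω ++ centralWord d m) i = dyadicA d ω i + h * (2⁻¹ - e) := by
    intro i
    rw [dyadicA_append, dyadicA_centralWord d hm]
  have hx : ∀ i, x i = dyadicA d ω i + h * (2⁻¹ - e) + h * e / 2 := by
    intro i
    simp only [x, dyadicA_append (u := ω ++ centralWord d m), hcorner, hlen, hside,
      dyadicA_cons, dyadicA_nil, if_true]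
    ring
  have hh : 0 < h := by positivity
  have hsmall : Metric.closedBall x (h * e / 4) ⊆ Qcube d (ω ++ centralWord d m) := by
    refine closedBall_subset_Qcube fun i => ?_
    rw [hcorner, hlen, hside, hx]
    constructor <;> nlinarith [mul_pos hh he]
  have hbig : Qcube d ω ⊆ Metric.closedBall x h :=
    Qcube_subset_closedBall fun i => by
      rw [hx]
      constructor <;> nlinarith [mul_pos hh he]
  have hr : h * e / 4 = ((2 : ℝ) ^ (k + (m + 2)))⁻¹ := by
    rw [pow_add, pow_add, mul_inv, mul_inv]
    norm_num
    ring
  obtain ⟨hrR, hRR, hR1⟩ :=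
    inv_two_pow_admissible_scales (n := m + 2) hδ hk (by push_cast; linarith)
  have hratio : h / (h * e / 4) = (2 : ℝ) ^ (m + 2) := by
    rw [pow_add]
    field_simp
    simp [e]
    norm_num
  calc μ (Qcube d ω) / μ (Qcube d (ω ++ centralWord d m))
      ≤ μ (Metric.closedBall x h) / μ (Metric.closedBall x (h * e / 4)) :=
        ENNReal.div_le_div (measure_mono hbig) (measure_mono hsmall)
    _ ≤ ENNReal.ofReal (C * ((2 : ℝ) ^ (m + 2)) ^ s) := by
        rw [← hratio]
        exact hbound x (dyadicA_mem_msupport hpos _) _ _ (by positivity) (hr ▸ hrR) hRR hR1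

lemma log2_le_ofReal_logb {y : ℝ≥0∞} {A : ℝ} (hA : 1 ≤ A) (hy : y ≤ ENNReal.ofReal A) :
    log2 y ≤ ENNReal.ofReal (Real.logb 2 A) := by
  have hy_top : y ≠ ⊤ := ne_top_of_le_ne_top ENNReal.ofReal_ne_top hy
  rw [log2, if_neg hy_top]
  refine ENNReal.ofReal_le_ofReal ?_
  have hyA : y.toReal ≤ A := ENNReal.toReal_le_of_le_ofReal (by linarith) hy
  rcases ENNReal.toReal_nonneg.eq_or_lt with hzero | hpos
  · rw [← hzero, Real.logb_zero]
    exact Real.logb_nonneg one_lt_two hA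
  · exact Real.logb_le_logb_of_le one_lt_two hpos hyA

lemma limsup_log2_div_le_of_le_rpow {y : ℕ → ℝ≥0∞} {C s : ℝ}
    (hy : ∀ᶠ m in atTop, y m ≤ ENNReal.ofReal (C * ((2 : ℝ) ^ (m + 2)) ^ s)) :
    limsup (fun m : ℕ => log2 (y m) / (m : ℝ≥0∞)) atTop ≤ ENNReal.ofReal s := by
  set t := max s 0
  set L := Real.logb 2 (max C 1)
  have hlog : ∀ m : ℕ, y m ≤ ENNReal.ofReal (C * ((2 : ℝ) ^ (m + 2)) ^ s) →
      log2 (y m) ≤ ENNReal.ofReal (L + (m + 2) * t) := by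
    intro m hm
    have hbase : (1 : ℝ) ≤ (2 : ℝ) ^ (m + 2) := one_le_pow₀ one_le_two
    have hpow : ((2 : ℝ) ^ (m + 2)) ^ s ≤ ((2 : ℝ) ^ (m + 2)) ^ t :=
      Real.rpow_le_rpow_of_exponent_le hbase (le_max_left _ _)
    have hA : 1 ≤ max C 1 * ((2 : ℝ) ^ (m + 2)) ^ t :=
      one_le_mul_of_one_le_of_one_le (le_max_right _ _) (Real.one_le_rpow hbase (le_max_right _ _))
    have hlogb : Real.logb 2 (max C 1 * ((2 : ℝ) ^ (m + 2)) ^ t) = L + (m + 2) * t := by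
      rw [Real.logb_mul (by positivity) (by positivity),
        Real.logb_rpow_eq_mul_logb_of_pos (by positivity), Real.logb_pow,
        Real.logb_self_eq_one one_lt_two]
      push_cast
      ring
    refine hlogb ▸ log2_le_ofReal_logb hA (hm.trans (ENNReal.ofReal_le_ofReal ?_))
    exact mul_le_mul (le_max_left _ _) hpow (by positivity) (by positivity)
  have hle : ∀ᶠ m : ℕ in atTop,
      log2 (y m) / (m : ℝ≥0∞) ≤ ENNReal.ofReal ((L + (m + 2) * t) / m) := by
    filter_upwards [hy, eventually_ge_atTop 1] with m hm hm1
    rw [ENNReal.ofReal_div_of_pos (by exact_mod_cast hm1), ENNReal.ofReal_natCast]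
    exact ENNReal.div_le_div_right (hlog m hm) _
  have hlim : Tendsto (fun m : ℕ => ENNReal.ofReal ((L + (m + 2) * t) / m)) atTop
      (𝓝 (ENNReal.ofReal t)) := by
    refine ENNReal.tendsto_ofReal ?_
    have h0 := (tendsto_const_div_atTop_nhds_zero_nat (L + 2 * t)).const_add t
    rw [add_zero] at h0
    refine h0.congr' ?_
    filter_upwards [eventually_ge_atTop 1] with m hm
    field_simp
    ring
  calc limsup (fun m : ℕ => log2 (y m) / (m : ℝ≥0∞)) atTop
      ≤ limsup (fun m : ℕ => ENNReal.ofReal ((L + (m + 2) * t) / m)) atTop :=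
        limsup_le_limsup hle
    _ = ENNReal.ofReal s := by simp [hlim.limsup_eq, t]

lemma limsup_log2_HmdMeas_div_le_Hfun {d : ℕ} {μ : Measure (Fin d → ℝ)}
    (hpos : ∀ w : Wd d, 0 < μ (Qcube d w)) {δ' δ : ℝ} (hδ' : 0 < δ') (hδ'δ : δ' < δ) :
    limsup (fun m : ℕ => log2 (HmdMeas d μ δ m) / (m : ℝ≥0∞)) atTop ≤ Hfun d μ δ' := by
  have hδ : 0 < δ := hδ'.trans hδ'δ
  refine le_iInf₂ fun s ⟨C, _, hbound⟩ => limsup_log2_div_le_of_le_rpow (C := C) ?_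
  filter_upwards [eventually_ge_atTop 1, eventually_ge_atTop ⌈δ⌉₊] with m hm hmδ
  refine iSup₂_le fun ω hω => (iInf₂_le (centralWord d m)
    ⟨centralWord_length d hm, isCentral_centralWord d m⟩).trans ?_
  have hkδ : (ω.length : ℝ) ≤ m / δ := hω ▸ Nat.floor_le (by positivity)
  have hk : 1 ≤ ω.length := by
    rw [hω, Nat.one_le_floor_iff, one_le_div hδ]
    exact (Nat.le_ceil δ).trans (by exact_mod_cast hmδ)
  have hkm : ω.length * δ' < m + 2 :=
    calc ω.length * δ' ≤ m / δ * δ := by gcongr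
      _ = m := div_mul_cancel₀ _ hδ.ne'
      _ < m + 2 := by linarith
  exact measure_Qcube_div_append_centralWord_le hpos hδ' hbound hk hm hkm

theorem stmt9 (d : ℕ) (μ : Measure (Fin d → ℝ))
    (hpos : ∀ w : Wd d, 0 < μ (Qcube d w)) :
    (∀ δ' δ : ℝ, 0 < δ' → δ' < δ →
      Filter.limsup (fun m : ℕ => log2 (HmdMeas d μ δ m) / (m : ℝ≥0∞)) Filter.atTop ≤
        Hfun d μ δ') ∧
    (⨆ (δ : ℝ) (_ : 0 < δ),
      Filter.limsup (fun m : ℕ => log2 (HmdMeas d μ δ m) / (m : ℝ≥0∞)) Filter.atTop) ≤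
      dimqA d μ ∧
    ((⨆ (δ : ℝ) (_ : 0 < δ),
      Filter.limsup (fun m : ℕ => log2 (HmdMeas d μ δ m) / (m : ℝ≥0∞)) Filter.atTop) = ⊤ →
      dimqA d μ = ⊤) := by
  have hfixed : ∀ δ' δ : ℝ, 0 < δ' → δ' < δ →
      limsup (fun m : ℕ => log2 (HmdMeas d μ δ m) / (m : ℝ≥0∞)) atTop ≤ Hfun d μ δ' :=
    fun _ _ => limsup_log2_HmdMeas_div_le_Hfun hpos
  have hsup : (⨆ (δ : ℝ) (_ : 0 < δ),
      limsup (fun m : ℕ => log2 (HmdMeas d μ δ m) / (m : ℝ≥0∞)) atTop) ≤ dimqA d μ :=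
    iSup₂_le fun δ hδ => (hfixed (δ / 2) δ (by linarith) (by linarith)).trans
      (le_iSup₂ (f := fun δ' (_ : 0 < δ') => Hfun d μ δ') (δ / 2) (by linarith))
  exact ⟨hfixed, hsup, fun htop => top_le_iff.mp (htop ▸ hsup)⟩
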